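/- arXiv:math/0607412 — 2 statements merged into one kernel-verified Lean document; each statement's English description precedes it below -/
import Mathlib

section
/- Let K be a field, A a finite alphabet and n ≥ 1. Identify a triple (λ, μ, γ), with λ ∈ K^{1×n}, μ given by a choice of matrix μ(a) ∈ K^{n×n} for each a ∈ A (extended to a monoid morphism on A*), and γ ∈ K^{n×1}, with a point of K^{|A|n²+2n}. Then there exist an integer s and a polynomial map P : K^{|A|n²+2n} → K^s (each coordinate of P a polynomial in the entries of λ, the μ(a), and γ) such that P(λ, μ, γ) = 0 if and only if the linear representation (λ, μ, γ) is not minimal, i.e. the series w ↦ λ μ(w) γ admits a linear representation of dimension strictly less than n. -/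
open Matrix

/-- The matrix of a word: extend the letter matrices `μ` multiplicatively. -/
def wordMat {K A : Type*} [Semiring K] {d : ℕ}
    (μ : A → Matrix (Fin d) (Fin d) K) (w : List A) : Matrix (Fin d) (Fin d) K :=
  (w.map μ).prod

/-- The coefficient `λ μ(w) γ` of the behaviour of the automaton `(λ, μ, γ)` at `w`. -/
def wordCoeff {K A : Type*} [Semiring K] {d : ℕ}
    (lam : Fin d → K) (μ : A → Matrix (Fin d) (Fin d) K) (gam : Fin d → K)
    (w : List A) : K :=
  lam ⬝ᵥ (wordMat μ w *ᵥ gam)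

/-- A series admits a linear representation of dimension `d`. -/
def hasRep {K A : Type*} [Semiring K] (S : List A → K) (d : ℕ) : Prop :=
  ∃ (lam : Fin d → K) (μ : A → Matrix (Fin d) (Fin d) K) (gam : Fin d → K),
    ∀ w, S w = wordCoeff lam μ gam w

namespace Stmt4Aux

open Submodule Module

variable {K A : Type*}

section sr
variable [Semiring K] {d : ℕ} (μ : A → Matrix (Fin d) (Fin d) K)

theorem wordMat_nil : wordMat μ ([] : List A) = 1 := rfl

theorem wordMat_cons (a : A) (w : List A) : wordMat μ (a :: w) = μ a * wordMat μ w := by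
  simp [wordMat]

theorem wordMat_append (u v : List A) :
    wordMat μ (u ++ v) = wordMat μ u * wordMat μ v := by
  simp [wordMat]

theorem wordCoeff_append (lam gam : Fin d → K) (u v : List A) :
    wordCoeff lam μ gam (u ++ v) = (lam ᵥ* wordMat μ u) ⬝ᵥ (wordMat μ v *ᵥ gam) := by
  rw [wordCoeff, wordMat_append, ← Matrix.mulVec_mulVec, Matrix.dotProduct_mulVec]

end sr

section cr
variable [CommSemiring K] {d : ℕ} (μ : A → Matrix (Fin d) (Fin d) K)

theorem wordMat_transpose (w : List A) :
    (wordMat μ w)ᵀ = wordMat (fun a => (μ a)ᵀ) w.reverse := by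
  simp only [wordMat, Matrix.transpose_list_prod, List.map_map, ← List.map_reverse]
  rfl

theorem wordCoeff_rev (lam gam : Fin d → K) (w : List A) :
    wordCoeff gam (fun a => (μ a)ᵀ) lam w = wordCoeff lam μ gam w.reverse := by
  have h : wordMat (fun a => (μ a)ᵀ) w = (wordMat μ w.reverse)ᵀ := by
    rw [wordMat_transpose μ w.reverse, List.reverse_reverse]
  rw [wordCoeff, h, Matrix.mulVec_transpose, dotProduct_comm, ← Matrix.dotProduct_mulVec,
    wordCoeff]

theorem hasRep_reverse {S : List A → K} {m : ℕ}
    (h : hasRep (fun w : List A => S w.reverse) m) : hasRep S m := by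
  obtain ⟨l, mu, g, h⟩ := h
  refine ⟨g, fun a => (mu a)ᵀ, l, fun w => ?_⟩
  rw [wordCoeff_rev]
  have := (h w.reverse).symm
  simpa using this.symm

end cr

section map
variable {L : Type*} [Semiring K] [Semiring L] {d : ℕ}

theorem wordMat_map (φ : K →+* L) (μ : A → Matrix (Fin d) (Fin d) K) (w : List A) :
    (wordMat μ w).map φ = wordMat (fun a => (μ a).map φ) w := by
  induction w with
  | nil => simp [wordMat_nil, Matrix.map_one φ φ.map_zero φ.map_one]
  | cons a w ih => rw [wordMat_cons, wordMat_cons, Matrix.map_mul, ih]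

theorem wordCoeff_map (φ : K →+* L) (lam : Fin d → K) (μ : A → Matrix (Fin d) (Fin d) K)
    (gam : Fin d → K) (w : List A) :
    φ (wordCoeff lam μ gam w) =
      wordCoeff (φ ∘ lam) (fun a => (μ a).map φ) (φ ∘ gam) w := by
  simp only [wordCoeff, ← wordMat_map φ μ w, dotProduct, Matrix.mulVec, map_sum,
    _root_.map_mul, Matrix.map_apply, Function.comp_apply]

end map

section field
variable [Field K]

/-- Reduction to the backward space: a series always has a representation whose dimension
is the finrank of the span of the vectors `μ(w) γ`. -/
theorem red {n : ℕ} (lam : Fin n → K) (μ : A → Matrix (Fin n) (Fin n) K) (gam : Fin n → K) :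
    hasRep (wordCoeff lam μ gam)
      (finrank K (span K (Set.range fun w : List A => wordMat μ w *ᵥ gam))) := by
  set U := span K (Set.range fun w : List A => wordMat μ w *ᵥ gam) with hU
  have hmem : ∀ w : List A, wordMat μ w *ᵥ gam ∈ U := fun w => subset_span ⟨w, rfl⟩
  have hinv : ∀ a : A, ∀ x ∈ U, (μ a).mulVecLin x ∈ U := by
    intro a x hx
    have hle : Submodule.map ((μ a).mulVecLin) U ≤ U := by
      rw [hU, Submodule.map_span, span_le]
      rintro y ⟨z, ⟨w, rfl⟩, rfl⟩
      have : (μ a).mulVecLin (wordMat μ w *ᵥ gam) = wordMat μ (a :: w) *ᵥ gam := by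
        rw [Matrix.mulVecLin_apply, Matrix.mulVec_mulVec, wordMat_cons]
      rw [this]; exact hmem (a :: w)
    exact hle ⟨x, hx, rfl⟩
  let b := Module.finBasis K U
  let T : A → (U →ₗ[K] U) := fun a => ((μ a).mulVecLin).restrict (hinv a)
  let uV : List A → U := fun w => ⟨wordMat μ w *ᵥ gam, hmem w⟩
  refine ⟨fun i => lam ⬝ᵥ (b i : Fin n → K), fun a => LinearMap.toMatrix b b (T a),
    fun i => b.repr (uV []) i, fun w => ?_⟩
  have key : ∀ w : List A,
      wordMat (fun a => LinearMap.toMatrix b b (T a)) w *ᵥ (fun i => b.repr (uV []) i)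
        = fun i => b.repr (uV w) i := by
    intro w
    induction w with
    | nil => rw [wordMat_nil, Matrix.one_mulVec]
    | cons a w ih =>
      rw [wordMat_cons, ← Matrix.mulVec_mulVec, ih]
      have h1 : T a (uV w) = uV (a :: w) := by
        apply Subtype.ext
        show (μ a).mulVecLin ((uV w : Fin n → K)) = (uV (a :: w) : Fin n → K)
        rw [Matrix.mulVecLin_apply]
        show μ a *ᵥ (wordMat μ w *ᵥ gam) = wordMat μ (a :: w) *ᵥ gam
        rw [Matrix.mulVec_mulVec, wordMat_cons]
      have h2 := LinearMap.toMatrix_mulVec_repr b b (T a) (uV w)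
      rw [← h1]
      exact h2
  have hsum : ((uV w : Fin n → K)) = ∑ i, b.repr (uV w) i • (b i : Fin n → K) := by
    conv_lhs => rw [← b.sum_repr (uV w)]
    push_cast
    rfl
  calc wordCoeff lam μ gam w
      = lam ⬝ᵥ ((uV w : Fin n → K)) := rfl
    _ = (fun i => lam ⬝ᵥ (b i : Fin n → K)) ⬝ᵥ (fun i => b.repr (uV w) i) := by
        rw [hsum]
        simp only [dotProduct, Finset.sum_apply, Pi.smul_apply, smul_eq_mul,
          Finset.mul_sum, Finset.sum_mul]
        rw [Finset.sum_comm]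
        apply Finset.sum_congr rfl
        intro i _
        apply Finset.sum_congr rfl
        intro j _
        ring
    _ = wordCoeff (fun i => lam ⬝ᵥ (b i : Fin n → K))
          (fun a => LinearMap.toMatrix b b (T a)) (fun i => b.repr (uV []) i) w := by
        rw [wordCoeff, key]

end field

/-- Index type for words of length `< n`. -/
abbrev Word (n : ℕ) (A : Type*) := (k : Fin n) × (Fin k.val → A)

/-- The word indexed by an element of `Word n A`. -/
def word {n : ℕ} {A : Type*} (i : Word n A) : List A := List.ofFn i.2

theorem word_length {n : ℕ} {A : Type*} (i : Word n A) : (word i).length < n := by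
  simp [word]

theorem word_surj {n : ℕ} {A : Type*} (w : List A) (h : w.length < n) :
    ∃ i : Word n A, word i = w :=
  ⟨⟨⟨w.length, h⟩, w.get⟩, List.ofFn_get w⟩

section field2
variable [Field K]

theorem span_range_word {n : ℕ} (hn : 1 ≤ n) (μ : A → Matrix (Fin n) (Fin n) K)
    (gam : Fin n → K) :
    span K (Set.range fun i : Word n A => wordMat μ (word i) *ᵥ gam)
      = span K (Set.range fun w : List A => wordMat μ w *ᵥ gam) := by
  set c : List A → (Fin n → K) := fun w => wordMat μ w *ᵥ gam with hc
  set Uk : ℕ → Submodule K (Fin n → K) := fun k => span K (c '' {w | w.length ≤ k}) with hUk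
  have hgen : ∀ (k : ℕ) (w : List A), w.length ≤ k → c w ∈ Uk k := fun k w hw =>
    subset_span ⟨w, hw, rfl⟩
  have hspanle : ∀ (k : ℕ) (p : Submodule K (Fin n → K)),
      (∀ w : List A, w.length ≤ k → c w ∈ p) → Uk k ≤ p := by
    intro k p hp
    simp only [hUk]
    rw [span_le]
    rintro x ⟨w, hw, rfl⟩
    exact hp w hw
  have hmono : ∀ {k l : ℕ}, k ≤ l → Uk k ≤ Uk l := fun {k l} h =>
    hspanle k (Uk l) fun w hw => hgen l w (le_trans hw h)
  have hmul : ∀ (a : A) (w : List A), (μ a).mulVecLin (c w) = c (a :: w) := by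
    intro a w
    simp only [hc, Matrix.mulVecLin_apply, Matrix.mulVec_mulVec, wordMat_cons]
  have hstep : ∀ k, Uk (k + 1) = Uk k ⊔ ⨆ a : A, (Uk k).map ((μ a).mulVecLin) := by
    intro k
    apply le_antisymm
    · apply hspanle
      intro w hw
      cases w with
      | nil => exact Submodule.mem_sup_left (hgen k [] (by simp))
      | cons a t =>
        apply Submodule.mem_sup_right
        apply Submodule.mem_iSup_of_mem a
        have ht : c t ∈ Uk k := hgen k t (by simp only [List.length_cons] at hw; omega)
        exact hmul a t ▸ Submodule.mem_map_of_mem ht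
    · apply sup_le (hmono (Nat.le_succ k))
      apply iSup_le
      intro a
      rw [Submodule.map_le_iff_le_comap]
      apply hspanle
      intro w hw
      rw [Submodule.mem_comap, hmul a w]
      exact hgen (k + 1) (a :: w) (by simp only [List.length_cons]; omega)
  have hstab : ∀ k, Uk k = Uk (k + 1) → ∀ j, Uk (k + j) = Uk k := by
    intro k hk j
    induction j with
    | zero => rfl
    | succ j ih =>
      have h3 : k + (j + 1) = (k + j) + 1 := by omega
      rw [h3, hstep (k + j), ih, ← hstep k, ← hk]
  have hex : ∃ k < n, Uk k = Uk (k + 1) := by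
    by_cases hg : gam = 0
    · refine ⟨0, hn, ?_⟩
      have hbot : ∀ m, Uk m = ⊥ := by
        intro m
        rw [eq_bot_iff]
        apply hspanle
        intro w _
        simp [hc, hg, Matrix.mulVec_zero]
      rw [hbot 0, hbot 1]
    · by_contra hcon
      push_neg at hcon
      have hlt : ∀ k < n, Uk k < Uk (k + 1) := fun k hk =>
        lt_of_le_of_ne (hmono (Nat.le_succ k)) (hcon k hk)
      have hrank : ∀ k, k ≤ n → k + 1 ≤ finrank K (Uk k) := by
        intro k
        induction k with
        | zero =>
          intro _
          have hgm : gam ∈ Uk 0 := by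
            have := hgen 0 [] (by simp)
            simpa [hc, wordMat_nil, Matrix.one_mulVec] using this
          by_contra h0
          have h1 : finrank K (Uk 0) = 0 := by omega
          have h2 : Uk 0 = ⊥ := Submodule.finrank_eq_zero.mp h1
          rw [h2] at hgm
          exact hg (by simpa using hgm)
        | succ k ih =>
          intro hk
          have h1 := Submodule.finrank_lt_finrank_of_lt (hlt k (by omega))
          have h2 := ih (by omega)
          omega
      have h1 := hrank n le_rfl
      have h2 : finrank K (Uk n) ≤ n := by
        have := Submodule.finrank_le (Uk n)
        simpa [Module.finrank_fin_fun] using this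
      omega
  obtain ⟨k0, hk0n, hk0⟩ := hex
  have huniv : ∀ m, n - 1 ≤ m → Uk m = Uk (n - 1) := by
    intro m hm
    have e1 : Uk m = Uk k0 := by
      have := hstab k0 hk0 (m - k0)
      rwa [Nat.add_sub_cancel' (by omega)] at this
    have e2 : Uk (n - 1) = Uk k0 := by
      have := hstab k0 hk0 (n - 1 - k0)
      rwa [Nat.add_sub_cancel' (by omega)] at this
    rw [e1, e2]
  apply le_antisymm
  · rw [span_le]
    rintro x ⟨i, rfl⟩
    have h1 : c (word i) ∈ Uk (n - 1) := hgen (n - 1) (word i)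
      (by have := word_length i; omega)
    have h2 : Uk (n - 1) ≤ span K (Set.range c) :=
      hspanle (n - 1) _ fun w _ => subset_span ⟨w, rfl⟩
    exact h2 h1
  · rw [span_le]
    rintro x ⟨w, rfl⟩
    have h1 : c w ∈ Uk (max (n - 1) w.length) := hgen _ w (le_max_right _ _)
    have h2 : Uk (max (n - 1) w.length) = Uk (n - 1) := huniv _ (le_max_left _ _)
    rw [h2] at h1
    have h3 : Uk (n - 1) ≤ span K (Set.range fun i : Word n A => c (word i)) := by
      apply hspanle
      intro w' hw'
      obtain ⟨i, hi⟩ := word_surj (n := n) w' (by omega)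
      exact subset_span ⟨i, by simp only []; rw [hi]⟩
    exact h3 h1

theorem exists_indep {V : Type*} [AddCommGroup V] [Module K V] [FiniteDimensional K V]
    {ι : Type*} {m : ℕ} (c : ι → V) (h : span K (Set.range c) = ⊤)
    (hm : finrank K V = m) :
    ∃ g : Fin m → ι, LinearIndependent K (c ∘ g) := by
  obtain ⟨t, hts, hst, hli⟩ := exists_linearIndependent K (Set.range c)
  have htop : span K t = ⊤ := by rw [hst, h]
  haveI : Fintype t := (hli.setFinite).fintype
  let b : Basis t K V := Basis.mk hli (by rw [Subtype.range_coe]; exact le_of_eq htop.symm)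
  have hcard : Fintype.card t = m := by
    rw [← hm, ← Module.finrank_eq_card_basis b]
  let e : Fin m ≃ t := (Fintype.equivFinOfCardEq hcard).symm
  have hpre : ∀ x : t, ∃ j : ι, c j = (x : V) := fun x => hts x.2
  choose g hg using fun i : Fin m => hpre (e i)
  refine ⟨g, ?_⟩
  have heq : c ∘ g = fun i => ((e i : t) : V) := funext fun i => hg i
  rw [heq]
  exact hli.comp e e.injective

theorem det_ne_zero_rows {m : ℕ} {M : Matrix (Fin m) (Fin m) K}
    (h : LinearIndependent K (fun i => M i)) : M.det ≠ 0 := by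
  intro hdet
  obtain ⟨v, hv, hvM⟩ := Matrix.exists_vecMul_eq_zero_iff.2 hdet
  apply hv
  have hsum : ∑ i, v i • M i = 0 := by
    have : ∑ i, v i • M i = v ᵥ* M := by
      ext j
      simp [Matrix.vecMul, dotProduct]
    rw [this, hvM]
  have := Fintype.linearIndependent_iff.mp h v hsum
  funext i
  exact this i

end field2

end Stmt4Aux

open Stmt4Aux Submodule Module

/-- Identifying a triple `(λ, μ, γ)` of dimension `n` with a point of
`K^{|A|n²+2n}`, there are `s` and a polynomial map `P : K^{|A|n²+2n} → K^s` such that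
`P(λ, μ, γ) = 0` iff `(λ, μ, γ)` is not minimal, i.e. iff the series `w ↦ λ μ(w) γ`
has a representation of dimension `< n`. -/
theorem stmt_4 {K A : Type*} [Field K] [Fintype A] (n : ℕ) (hn : 1 ≤ n) :
    ∃ (s : ℕ) (P : Fin s → MvPolynomial ((A × Fin n × Fin n) ⊕ (Fin n ⊕ Fin n)) K),
      ∀ (lam : Fin n → K) (μ : A → Matrix (Fin n) (Fin n) K) (gam : Fin n → K),
        (∀ i, MvPolynomial.eval
            (Sum.elim (fun x : A × Fin n × Fin n => μ x.1 x.2.1 x.2.2)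
              (Sum.elim lam gam)) (P i) = 0)
          ↔ ∃ d < n, hasRep (wordCoeff lam μ gam) d := by
  classical
  set Vars := (A × Fin n × Fin n) ⊕ (Fin n ⊕ Fin n) with hVars
  let pμ : A → Matrix (Fin n) (Fin n) (MvPolynomial Vars K) := fun a =>
    Matrix.of fun i j => MvPolynomial.X (Sum.inl (a, i, j))
  let pl : Fin n → MvPolynomial Vars K := fun i => MvPolynomial.X (Sum.inr (Sum.inl i))
  let pg : Fin n → MvPolynomial Vars K := fun i => MvPolynomial.X (Sum.inr (Sum.inr i))
  let Mp : Matrix (Word n A) (Word n A) (MvPolynomial Vars K) :=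
    Matrix.of fun i j => wordCoeff pl pμ pg (word i ++ word j)
  let T := (Fin n → Word n A) × (Fin n → Word n A)
  let e : T ≃ Fin (Fintype.card T) := Fintype.equivFin T
  refine ⟨Fintype.card T,
    fun i => (Mp.submatrix (e.symm i).1 (e.symm i).2).det, ?_⟩
  intro lam μ gam
  set σ : Vars → K := Sum.elim (fun x : A × Fin n × Fin n => μ x.1 x.2.1 x.2.2)
    (Sum.elim lam gam) with hσ
  let Mm : Matrix (Word n A) (Word n A) K :=
    Matrix.of fun i j => wordCoeff lam μ gam (word i ++ word j)
  have hmap : Mp.map (MvPolynomial.eval σ) = Mm := by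
    ext i j
    show MvPolynomial.eval σ (wordCoeff pl pμ pg (word i ++ word j))
      = wordCoeff lam μ gam (word i ++ word j)
    rw [wordCoeff_map (MvPolynomial.eval σ)]
    congr 1
    · funext i; simp [pl, hσ]
    · funext a; ext i j; simp [pμ, hσ]
    · funext i; simp [pg, hσ]
  have heval : ∀ (f g : Fin n → Word n A),
      MvPolynomial.eval σ ((Mp.submatrix f g).det) = (Mm.submatrix f g).det := by
    intro f g
    rw [RingHom.map_det]
    congr 1
    rw [← hmap]
    rfl
  constructor
  · intro hP
    have hmin : ∀ f g : Fin n → Word n A, (Mm.submatrix f g).det = 0 := by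
      intro f g
      have h1 := hP (e (f, g))
      simp only [Equiv.symm_apply_apply] at h1
      rw [← heval f g]
      exact h1
    by_contra hno
    push_neg at hno
    -- column space has full rank
    have hUc : finrank K (span K (Set.range fun w : List A => wordMat μ w *ᵥ gam)) = n := by
      by_contra hne
      have hle : finrank K (span K (Set.range fun w : List A => wordMat μ w *ᵥ gam)) ≤ n := by
        have := Submodule.finrank_le (span K (Set.range fun w : List A => wordMat μ w *ᵥ gam))
        simpa [Module.finrank_fin_fun] using this
      exact hno _ (by omega) (red lam μ gam)
    -- row space has full rank
    have hUr : finrank K (span K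
        (Set.range fun w : List A => wordMat (fun a => (μ a)ᵀ) w *ᵥ lam)) = n := by
      by_contra hne
      have hle : finrank K (span K
          (Set.range fun w : List A => wordMat (fun a => (μ a)ᵀ) w *ᵥ lam)) ≤ n := by
        have := Submodule.finrank_le (span K
          (Set.range fun w : List A => wordMat (fun a => (μ a)ᵀ) w *ᵥ lam))
        simpa [Module.finrank_fin_fun] using this
      have hrep' : hasRep (wordCoeff lam μ gam) (finrank K (span K
          (Set.range fun w : List A => wordMat (fun a => (μ a)ᵀ) w *ᵥ lam))) := by
        apply hasRep_reverse
        have h2 := red gam (fun a => (μ a)ᵀ) lam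
        have h3 : (fun w : List A => wordCoeff lam μ gam w.reverse)
            = wordCoeff gam (fun a => (μ a)ᵀ) lam := by
          funext w
          rw [wordCoeff_rev]
        rw [h3]
        exact h2
      exact hno _ (by omega) hrep'
    -- spanning families indexed by Word n A
    let c : Word n A → (Fin n → K) := fun i => wordMat μ (word i) *ᵥ gam
    let r : Word n A → (Fin n → K) := fun i => lam ᵥ* wordMat μ (word i)
    have hcs : span K (Set.range c) = ⊤ := by
      show span K (Set.range fun i : Word n A => wordMat μ (word i) *ᵥ gam) = ⊤
      rw [span_range_word hn]
      apply Submodule.eq_top_of_finrank_eq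
      rw [hUc, Module.finrank_fin_fun]
    have hkey : ∀ w : List A, lam ᵥ* wordMat μ w = wordMat (fun a => (μ a)ᵀ) w.reverse *ᵥ lam := by
      intro w
      rw [← Matrix.mulVec_transpose, wordMat_transpose]
    have hsetr : Set.range r
        = Set.range (fun i : Word n A => wordMat (fun a => (μ a)ᵀ) (word i) *ᵥ lam) := by
      ext x
      constructor
      · rintro ⟨i, rfl⟩
        obtain ⟨i', hi'⟩ := word_surj (n := n) (word i).reverse
          (by rw [List.length_reverse]; exact word_length i)
        exact ⟨i', by simp only []; rw [hi', ← hkey]⟩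
      · rintro ⟨i, rfl⟩
        obtain ⟨i', hi'⟩ := word_surj (n := n) (word i).reverse
          (by rw [List.length_reverse]; exact word_length i)
        refine ⟨i', ?_⟩
        show lam ᵥ* wordMat μ (word i') = _
        rw [hkey, hi', List.reverse_reverse]
    have hrs : span K (Set.range r) = ⊤ := by
      rw [hsetr, span_range_word hn]
      apply Submodule.eq_top_of_finrank_eq
      rw [hUr, Module.finrank_fin_fun]
    have hfr : finrank K (Fin n → K) = n := Module.finrank_fin_fun K
    obtain ⟨g, hg⟩ := exists_indep c hcs hfr
    obtain ⟨f, hf⟩ := exists_indep r hrs hfr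
    let Rm : Matrix (Fin n) (Fin n) K := Matrix.of fun i k => r (f i) k
    let Cm : Matrix (Fin n) (Fin n) K := Matrix.of fun k j => c (g j) k
    have hfact : Mm.submatrix f g = Rm * Cm := by
      ext i j
      show wordCoeff lam μ gam (word (f i) ++ word (g j)) = _
      rw [wordCoeff_append]
      rfl
    have hdR : Rm.det ≠ 0 := by
      apply det_ne_zero_rows
      have : (fun i => Rm i) = r ∘ f := rfl
      rw [this]
      exact hf
    have hdC : Cm.det ≠ 0 := by
      rw [← Matrix.det_transpose]
      apply det_ne_zero_rows
      have : (fun j => Cmᵀ j) = c ∘ g := by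
        funext j
        ext k
        rfl
      rw [this]
      exact hg
    have := hmin f g
    rw [hfact, Matrix.det_mul] at this
    exact (mul_ne_zero hdR hdC) this
  · rintro ⟨d, hd, l', m', g', hrep⟩
    intro i
    set f := (e.symm i).1 with hfdef
    set g := (e.symm i).2 with hgdef
    rw [heval f g]
    let L : Matrix (Fin n) (Fin d) K := Matrix.of fun x k => (l' ᵥ* wordMat m' (word (f x))) k
    let C : Matrix (Fin d) (Fin n) K := Matrix.of fun k y => (wordMat m' (word (g y)) *ᵥ g') k
    have hfact : Mm.submatrix f g = L * C := by
      ext x y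
      show wordCoeff lam μ gam (word (f x) ++ word (g y)) = _
      rw [hrep, wordCoeff_append, Matrix.mul_apply]
      rfl
    rw [hfact]
    by_contra hne
    have hunit : IsUnit (L * C) :=
      (Matrix.isUnit_iff_isUnit_det _).mpr (isUnit_iff_ne_zero.mpr hne)
    have h1 : (L * C).rank = n := by
      rw [Matrix.rank_of_isUnit _ hunit, Fintype.card_fin]
    have h2 : (L * C).rank ≤ d := le_trans (Matrix.rank_mul_le_left L C)
      (by simpa using Matrix.rank_le_card_width L)
    omega
end

section
/- Let K be any semiring and A a finite alphabet. Every monoid congruence on A* generated by a set of relators each of which is either of the form a ≡ b with a, b ∈ A letters, or of the form cd ≡ dc with c, d ∈ A letters, is K-⧢ compatible. -/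
/-- The shuffle coproduct `c : K⟨A⟩ → K⟨A⟩ ⊗ K⟨A⟩`, `c(a) = a⊗1 + 1⊗a`, realized in the
monoid algebra of `A* × A*` (which is the tensor square, with basis `u ⊗ v` and product
`(u₁⊗v₁)(u₂⊗v₂) = u₁u₂ ⊗ v₁v₂`), restricted to words. -/
noncomputable def cSh (K : Type*) [Semiring K] {A : Type*} :
    FreeMonoid A →* MonoidAlgebra K (FreeMonoid A × FreeMonoid A) :=
  FreeMonoid.lift fun a =>
    MonoidAlgebra.single (FreeMonoid.of a, 1) 1 +
      MonoidAlgebra.single (1, FreeMonoid.of a) 1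

/-- The natural map `K⟨A⟩ ⊗ K⟨A⟩ → K[A*/≡] ⊗ K[A*/≡]` induced by the projection
`A* → A*/≡`; `P ≡^{⊗2} Q` means `tens2 r P = tens2 r Q`. -/
noncomputable def tens2 {K A : Type*} [Semiring K] (r : Con (FreeMonoid A))
    (P : MonoidAlgebra K (FreeMonoid A × FreeMonoid A)) :
    MonoidAlgebra K (r.Quotient × r.Quotient) :=
  MonoidAlgebra.mapDomain (fun p : FreeMonoid A × FreeMonoid A => (r.mk' p.1, r.mk' p.2)) P

/-- A congruence `≡` on `A*` is `K`-⧢ compatible if `u ≡ v` implies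
`c(u) ≡^{⊗2} c(v)` for the shuffle coproduct `c`. -/
def KShCompat (K : Type*) [Semiring K] {A : Type*} (r : Con (FreeMonoid A)) : Prop :=
  ∀ u v : FreeMonoid A, r u v → tens2 r (cSh K u) = tens2 r (cSh K v)

/-- Relator of type (LE): `a ≡ 1` with `a` a letter (letter erasure). -/
def IsLE {A : Type*} (u v : FreeMonoid A) : Prop :=
  ∃ a : A, u = FreeMonoid.of a ∧ v = 1

/-- Relator of type (LI): `a ≡ b` with `a`, `b` letters (letter identification). -/
def IsLI {A : Type*} (u v : FreeMonoid A) : Prop :=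
  ∃ a b : A, u = FreeMonoid.of a ∧ v = FreeMonoid.of b

/-- Relator of type (LC): `ab ≡ ba` with `a`, `b` letters (partial commutation). -/
def IsLC {A : Type*} (u v : FreeMonoid A) : Prop :=
  ∃ a b : A, u = FreeMonoid.of a * FreeMonoid.of b ∧ v = FreeMonoid.of b * FreeMonoid.of a

/-- Over any semiring `K`, every congruence on `A*` generated by
relators of the form `a ≡ b` (letters) or `cd ≡ dc` (letters) is `K`-⧢ compatible. -/
theorem stmt_16 {K A : Type*} [Semiring K] [Fintype A]
    (rel : FreeMonoid A → FreeMonoid A → Prop)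
    (hrel : ∀ u v, rel u v → IsLI u v ∨ IsLC u v) :
    KShCompat K (conGen rel) := by
  set r := conGen rel with hr
  let f : FreeMonoid A × FreeMonoid A →* r.Quotient × r.Quotient :=
    MonoidHom.prodMap r.mk' r.mk'
  let F := MonoidAlgebra.mapDomainRingHom K f
  have hten : ∀ P : MonoidAlgebra K (FreeMonoid A × FreeMonoid A), tens2 r P = F P :=
    fun P => rfl
  let Ψ : FreeMonoid A →* MonoidAlgebra K (r.Quotient × r.Quotient) :=
    F.toMonoidHom.comp (cSh K)
  have hΨof : ∀ a : A, Ψ (FreeMonoid.of a) =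
      MonoidAlgebra.single (r.mk' (FreeMonoid.of a), 1) (1 : K) +
        MonoidAlgebra.single (1, r.mk' (FreeMonoid.of a)) 1 := by
    intro a
    show F (cSh K (FreeMonoid.of a)) = _
    rw [cSh, FreeMonoid.lift_eval_of]
    rw [map_add]
    show MonoidAlgebra.mapDomain f _ + MonoidAlgebra.mapDomain f _ = _
    rw [MonoidAlgebra.mapDomain_single, MonoidAlgebra.mapDomain_single]
    simp [f, MonoidHom.prodMap]
  have hgen : ∀ x y, rel x y → (Con.ker Ψ) x y := by
    intro x y hxy
    rw [Con.ker_rel]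
    have hrxy : r x y := ConGen.Rel.of x y hxy
    rcases hrel x y hxy with ⟨a, b, hx, hy⟩ | ⟨a, b, hx, hy⟩
    · subst hx; subst hy
      have : r.mk' (FreeMonoid.of a) = r.mk' (FreeMonoid.of b) := (Con.eq r).mpr hrxy
      rw [hΨof, hΨof, this]
    · subst hx; subst hy
      have hc : r.mk' (FreeMonoid.of a) * r.mk' (FreeMonoid.of b)
          = r.mk' (FreeMonoid.of b) * r.mk' (FreeMonoid.of a) := by
        rw [← map_mul, ← map_mul]
        exact (Con.eq r).mpr hrxy
      rw [map_mul, map_mul, hΨof a, hΨof b]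
      set A' := r.mk' (FreeMonoid.of a)
      set B' := r.mk' (FreeMonoid.of b)
      simp only [add_mul, mul_add, MonoidAlgebra.single_mul_single,
        Prod.mk_mul_mk, one_mul, mul_one]
      rw [hc]
      abel
  have hle : r ≤ Con.ker Ψ := Con.conGen_le.mpr hgen
  intro u v h
  rw [hten, hten]
  exact hle h
end
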